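/- arXiv:1902.08809 — 4 statements merged into one kernel-verified Lean document; each statement's English description precedes it below -/
import Mathlib

section
/- Define B(α) = (1-α)^{1-α} / (α^α · (1-2α)^{1-2α}) for 0 < α < 1/2. Then B attains its maximum on (0, 1/2) at α = 1/2 - 1/(2√5), and B(α) < 1.6181 for all α ∈ (0, 1/2). -/
/-!
Writing `log B(α) = α log((1-α)/α) + (1-2α) log((1-α)/(1-2α))` and bounding the two logarithms
by their tangent lines at `φ²` and `φ` (`φ` the golden ratio) gives
`log B(α) ≤ log φ + (1-α)(φ⁻² + φ⁻¹ - 1) = log φ`. Equality holds when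
`(1-α)/α = φ²` and `(1-α)/(1-2α) = φ`, which is the case at `α = 1/2 - 1/(2√5)`.
Finally `φ = (1 + √5)/2 < 1.6181`.
-/

/-- `B(α) = (1-α)^(1-α) / (α^α (1-2α)^(1-2α))`, using real exponentiation. -/
noncomputable def B (a : ℝ) : ℝ :=
  (1 - a) ^ (1 - a) / (a ^ a * (1 - 2 * a) ^ (1 - 2 * a))

open Real goldenRatio

lemma Real.log_le_log_add_div_sub_one {x t : ℝ} (hx : 0 < x) (ht : 0 < t) :
    log x ≤ log t + x / t - 1 := by
  have := log_le_sub_one_of_pos (div_pos hx ht)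
  rw [log_div hx.ne' ht.ne'] at this
  linarith

lemma Real.mul_log_div_le {p u t : ℝ} (hp : 0 < p) (hu : 0 < u) (ht : 0 < t) :
    p * log (u / p) ≤ p * log t + u / t - p := by
  calc p * log (u / p) ≤ p * (log t + u / p / t - 1) :=
        mul_le_mul_of_nonneg_left (log_le_log_add_div_sub_one (div_pos hu hp) ht) hp.le
    _ = p * log t + u / t - p := by field_simp

section B

variable {a : ℝ}

lemma B_pos (h0 : 0 < a) (h1 : a < 1 / 2) : 0 < B a := by
  have : 0 < 1 - a := by linarith
  have : 0 < 1 - 2 * a := by linarith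
  unfold B
  positivity

lemma log_B (h0 : 0 < a) (h1 : a < 1 / 2) :
    log (B a) = a * log ((1 - a) / a) + (1 - 2 * a) * log ((1 - a) / (1 - 2 * a)) := by
  have ha : 0 < 1 - a := by linarith
  have ha' : 0 < 1 - 2 * a := by linarith
  unfold B
  rw [log_div (by positivity) (by positivity), log_mul (by positivity) (by positivity),
    log_rpow ha, log_rpow h0, log_rpow ha', log_div ha.ne' h0.ne', log_div ha.ne' ha'.ne']
  ring

lemma B_le_goldenRatio (h0 : 0 < a) (h1 : a < 1 / 2) : B a ≤ φ := by
  have ha : 0 < 1 - a := by linarith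
  have ha' : 0 < 1 - 2 * a := by linarith
  have hφ2 : 0 < φ ^ 2 := by positivity
  have tangent₁ := mul_log_div_le h0 ha hφ2
  have tangent₂ := mul_log_div_le ha' ha goldenRatio_pos
  have hinv : (φ ^ 2)⁻¹ + φ⁻¹ = 1 := by
    rw [← inv_pow, inv_goldenRatio]
    linear_combination goldenConj_sq
  have hsum : (1 - a) / φ ^ 2 + (1 - a) / φ = 1 - a := by
    rw [div_eq_mul_inv, div_eq_mul_inv, ← mul_add, hinv, mul_one]
  rw [← log_le_log_iff (B_pos h0 h1) goldenRatio_pos, log_B h0 h1]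
  rw [log_pow] at tangent₁
  push_cast at tangent₁
  linarith

lemma B_critical_point : B (1 / 2 - 1 / (2 * √5)) = φ := by
  set c := 1 / 2 - 1 / (2 * √5) with hc
  have hs : √5 ^ 2 = 5 := sq_sqrt (by norm_num)
  have h0 : 0 < c := by
    rw [hc, sub_pos, div_lt_div_iff₀ (by positivity) (by norm_num)]
    nlinarith [sqrt_nonneg 5]
  have h1 : c < 1 / 2 := by
    rw [hc, sub_lt_self_iff]
    positivity
  have ratio₁ : (1 - c) / c = φ ^ 2 := by
    rw [div_eq_iff h0.ne', hc]
    field_simp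
    linear_combination -(1 + √5) * hs
  have ratio₂ : (1 - c) / (1 - 2 * c) = φ := by
    rw [div_eq_iff (by linarith), hc]
    field_simp
    ring
  apply log_injOn_pos (B_pos h0 h1) goldenRatio_pos
  rw [log_B h0 h1, ratio₁, ratio₂, log_pow]
  push_cast
  ring

end B

lemma goldenRatio_lt_1_6181 : φ < 1.6181 := by
  have : √5 < 2.2362 := (sqrt_lt' (by norm_num)).2 (by norm_num)
  rw [goldenRatio]
  linarith

/-- on `(0, 1/2)`, `B` attains its maximum at `α = 1/2 - 1/(2√5)`,
and `B(α) < 1.6181` for all `α ∈ (0, 1/2)`. -/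
theorem B_max_and_bound :
    ∀ a : ℝ, 0 < a → a < 1 / 2 →
      B a ≤ B (1 / 2 - 1 / (2 * Real.sqrt 5)) ∧ B a < 1.6181 := by
  intro a h0 h1
  rw [B_critical_point]
  exact ⟨B_le_goldenRatio h0 h1, (B_le_goldenRatio h0 h1).trans_lt goldenRatio_lt_1_6181⟩
end

section
/- Let π be a permutation of [k] and τ a permutation of [k] (an embedding order); set P_i = {(τ(1), π(τ(1))), …, (τ(i), π(τ(i)))} ⊆ S_π. If τ is the identity permutation (left-to-right order), then for every i, the boundary bd(P_i) has size at most 2k/3 + 1. -/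
/-!
Let `P` be the prefix of the first `i` indices. A point of `P` with an index-neighbor outside `P`
can only be the last point `i - 1`; every other boundary point has a value-neighbor outside `P`.
At most `#P` points of `P` have such a neighbor, and at most `2 · #Pᶜ` do, since each outside
point has only two values adjacent to its own and `π` is injective. As `#P + #Pᶜ = k`, this gives
`3 · (#bd(P) - 1) ≤ 2k`.
-/

/-- `q` and `r` are neighbors in the incidence graph `G_π` (adjacent index or
adjacent value).  Points of `S_π` are identified with their indices. -/
abbrev nbr {k : ℕ} (π : Equiv.Perm (Fin k)) (p q : Fin k) : Prop :=
  (p : ℕ) + 1 = (q : ℕ) ∨ (q : ℕ) + 1 = (p : ℕ) ∨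
  (π p : ℕ) + 1 = (π q : ℕ) ∨ (π q : ℕ) + 1 = (π p : ℕ)

/-- The boundary of a set `P ⊆ S_π`: points of `P` having a neighbor outside `P`. -/
def bdry {k : ℕ} (π : Equiv.Perm (Fin k)) (P : Finset (Fin k)) : Finset (Fin k) :=
  P.filter (fun p => ∃ q : Fin k, q ∉ P ∧ nbr π p q)

open Finset

def AdjBy {α : Type*} (f : α → ℕ) (p q : α) : Prop :=
  f p + 1 = f q ∨ f q + 1 = f p

instance {α : Type*} (f : α → ℕ) : DecidableRel (AdjBy f) :=
  fun _ _ => inferInstanceAs (Decidable (_ ∨ _))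

theorem card_filter_exists_adjBy_le {α : Type*} [DecidableEq α] {f : α → ℕ}
    (hf : Function.Injective f) (s t : Finset α) : #{p ∈ s | ∃ q ∈ t, AdjBy f p q} ≤ 2 * #t := by
  have hmaps : Set.MapsTo f ↑({p ∈ s | ∃ q ∈ t, AdjBy f p q} : Finset α)
      ↑(t.image (f · - 1) ∪ t.image (f · + 1)) := by
    rintro p hp
    obtain ⟨-, q, hq, hpq | hqp⟩ := mem_filter.1 hp
    · exact mem_union_left _ (mem_image.2 ⟨q, hq, by omega⟩)
    · exact mem_union_right _ (mem_image.2 ⟨q, hq, by omega⟩)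
  calc #{p ∈ s | ∃ q ∈ t, AdjBy f p q}
      ≤ #(t.image (f · - 1) ∪ t.image (f · + 1)) := card_le_card_of_injOn f hmaps hf.injOn
    _ ≤ #t + #t := (card_union_le _ _).trans (add_le_add card_image_le card_image_le)
    _ = 2 * #t := (two_mul _).symm

def bdryBy {α : Type*} [Fintype α] [DecidableEq α] (f : α → ℕ) (P : Finset α) : Finset α :=
  {p ∈ P | ∃ q ∈ Pᶜ, AdjBy f p q}

theorem bdry_eq_bdryBy_union {k : ℕ} (π : Equiv.Perm (Fin k)) (P : Finset (Fin k)) :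
    bdry π P = bdryBy Fin.val P ∪ bdryBy (fun p => (π p : ℕ)) P := by
  ext p
  simp only [bdry, bdryBy, AdjBy, nbr, mem_union, mem_filter, mem_compl, ← and_or_left,
    ← exists_or, or_assoc]

theorem three_mul_card_bdryBy_le {α : Type*} [Fintype α] [DecidableEq α] {f : α → ℕ}
    (hf : Function.Injective f) (P : Finset α) : 3 * #(bdryBy f P) ≤ 2 * Fintype.card α := by
  have h_le_P := card_filter_le P (fun p => ∃ q ∈ Pᶜ, AdjBy f p q)
  have h_le_compl := card_filter_exists_adjBy_le hf P Pᶜ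
  have h_split := card_add_card_compl P
  unfold bdryBy
  omega

theorem card_bdryBy_val_prefix_le_one (k i : ℕ) :
    #(bdryBy Fin.val (univ.filter fun q : Fin k => (q : ℕ) < i)) ≤ 1 := by
  refine card_le_one.2 fun a ha b hb => Fin.ext ?_
  simp only [bdryBy, AdjBy, mem_filter, mem_compl, mem_univ, true_and] at ha hb
  omega

theorem bdry_identity_order_le_general {k : ℕ} (π : Equiv.Perm (Fin k)) (i : ℕ) :
    ((bdry π (Finset.univ.filter (fun q : Fin k => (q : ℕ) < i))).card : ℝ)
      ≤ 2 * (k : ℝ) / 3 + 1 := by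
  set P := univ.filter fun q : Fin k => (q : ℕ) < i
  have h_index : #(bdryBy Fin.val P) ≤ 1 := card_bdryBy_val_prefix_le_one k i
  have h_value := three_mul_card_bdryBy_le (f := fun p => (π p : ℕ))
    (Fin.val_injective.comp π.injective) P
  rw [Fintype.card_fin] at h_value
  have h_union : #(bdry π P) ≤ #(bdryBy Fin.val P) + #(bdryBy (fun p => (π p : ℕ)) P) :=
    bdry_eq_bdryBy_union π P ▸ card_union_le _ _
  have h_nat : 3 * #(bdry π P) ≤ 2 * k + 3 := by omega
  have h_real : 3 * (#(bdry π P) : ℝ) ≤ 2 * k + 3 := by exact_mod_cast h_nat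
  linarith

/-- for the identity embedding order (left-to-right), every prefix
`P_i = {(1, π(1)), …, (i, π(i))}` has boundary of size at most `2k/3 + 1`. -/
theorem bdry_identity_order_le {k : ℕ} (π : Equiv.Perm (Fin k)) (i : ℕ) (hi : i ≤ k) :
    ((bdry π (Finset.univ.filter (fun q : Fin k => (q : ℕ) < i))).card : ℝ)
      ≤ 2 * (k : ℝ) / 3 + 1 :=
  bdry_identity_order_le_general π i
end

section
/- Let k be even and let Q^E ⊆ S_π be the set of even-index points and Q^O the set of odd-index points of a permutation π of [k]. Consider the embedding order that first takes all points of Q^E (in any order) and then the points of Q^O in increasing order of value. For every prefix P of this order that contains Q^E, every point p ∈ P all of whose existing neighbors lie in P is not in bd(P); in particular, once Q^E and the j lowest-valued odd points are embedded, the boundary size is at most k/2 + 1. -/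
open Finset

section LowerCount

variable {α β : Type*} [Fintype α] [Preorder β] [DecidableLT β] {s : α → Prop} [DecidablePred s]
  {f : α → β}

lemma card_filter_lt_le_of_le {x y : α} (hxy : f x ≤ f y) :
    #{z | s z ∧ f z < f x} ≤ #{z | s z ∧ f z < f y} :=
  card_le_card fun z hz => by
    simp only [mem_filter, mem_univ, true_and] at hz ⊢
    exact ⟨hz.1, hz.2.trans_le hxy⟩

lemma card_filter_lt_lt_of_lt {x y : α} (hx : s x) (hxy : f x < f y) :
    #{z | s z ∧ f z < f x} < #{z | s z ∧ f z < f y} := by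
  refine card_lt_card ((ssubset_iff_of_subset fun z hz => ?_).2 ⟨x, ?_, ?_⟩)
  · simp only [mem_filter, mem_univ, true_and] at hz ⊢
    exact ⟨hz.1, hz.2.trans hxy⟩
  · simp [hx, hxy]
  · simp

end LowerCount

lemma card_filter_even_succ_le (k : ℕ) : #{x : Fin k | Even ((x : ℕ) + 1)} ≤ k / 2 := by
  have hodd (x : Fin k) (hx : x ∈ ({x | Even ((x : ℕ) + 1)} : Finset (Fin k))) :
      (x : ℕ) % 2 = 1 := by
    simpa [Nat.even_add_one, Nat.odd_iff] using hx
  calc _ ≤ #(range (k / 2)) := by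
        refine card_le_card_of_injOn (fun x : Fin k => (x : ℕ) / 2) (fun x hx => ?_)
          fun x hx y hy hxy => ?_
        · have := hodd x hx
          simp only [coe_range, Set.mem_Iio]
          omega
        · have := hodd x hx
          have := hodd y hy
          have : (x : ℕ) / 2 = (y : ℕ) / 2 := hxy
          exact Fin.ext (by omega)
    _ = k / 2 := card_range _

section EvenOddOrder

variable {k : ℕ} (π : Equiv.Perm (Fin k))

lemma nbr_val_adj_of_odd {p q : Fin k} (hp : Odd ((p : ℕ) + 1)) (hq : Odd ((q : ℕ) + 1))
    (h : nbr π p q) : (π p : ℕ) + 1 = π q ∨ (π q : ℕ) + 1 = π p := by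
  rw [Nat.odd_iff] at hp hq
  rcases h with h | h | h | h <;> omega

/-- The position of an odd-index point `x` in the increasing-value order of `Q^O`. -/
def oddRank (x : Fin k) : ℕ := #{y : Fin k | Odd ((y : ℕ) + 1) ∧ π y < π x}

/-- The prefix of the embedding order consisting of `Q^E` and the `j` lowest-valued points of
`Q^O`. -/
def evenOddPrefix (j : ℕ) : Finset (Fin k) :=
  {x : Fin k | Even ((x : ℕ) + 1) ∨ (Odd ((x : ℕ) + 1) ∧ oddRank π x < j)}

lemma notMem_bdry_of_forall_nbr_mem {P : Finset (Fin k)} {p : Fin k}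
    (h : ∀ q, nbr π p q → q ∈ P) : p ∉ bdry π P := fun hp => by
  obtain ⟨-, q, hq, hpq⟩ := mem_filter.1 hp
  exact hq (h q hpq)

lemma mem_evenOddPrefix_of_even {j : ℕ} {x : Fin k} (hx : Even ((x : ℕ) + 1)) :
    x ∈ evenOddPrefix π j := by
  simp [evenOddPrefix, hx]

lemma mem_evenOddPrefix_iff_of_odd {j : ℕ} {x : Fin k} (hx : Odd ((x : ℕ) + 1)) :
    x ∈ evenOddPrefix π j ↔ oddRank π x < j := by
  simp [evenOddPrefix, hx, ← Nat.not_odd_iff_even]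

lemma exists_val_succ_notMem_of_mem_bdry {j : ℕ} {p : Fin k}
    (hp : p ∈ bdry π (evenOddPrefix π j)) (hpo : Odd ((p : ℕ) + 1)) :
    ∃ q : Fin k, Odd ((q : ℕ) + 1) ∧ j ≤ oddRank π q ∧ (π p : ℕ) + 1 = π q := by
  obtain ⟨hpP, q, hqP, hpq⟩ := mem_filter.1 hp
  have hqo : Odd ((q : ℕ) + 1) := by
    by_contra hqe
    exact hqP (mem_evenOddPrefix_of_even π (Nat.not_odd_iff_even.1 hqe))
  have hpj := (mem_evenOddPrefix_iff_of_odd π hpo).1 hpP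
  have hqj := not_lt.1 ((mem_evenOddPrefix_iff_of_odd π hqo).not.1 hqP)
  refine ⟨q, hqo, hqj, (nbr_val_adj_of_odd π hpo hqo hpq).resolve_right fun h => ?_⟩
  have : oddRank π q < oddRank π p :=
    card_filter_lt_lt_of_lt hqo (show π q < π p by rw [Fin.lt_def]; omega)
  omega

lemma val_le_of_mem_bdry_evenOddPrefix {j : ℕ} {a b : Fin k}
    (ha : a ∈ bdry π (evenOddPrefix π j)) (hao : Odd ((a : ℕ) + 1))
    (hb : b ∈ evenOddPrefix π j) (hbo : Odd ((b : ℕ) + 1)) : π b ≤ π a := by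
  by_contra! hab
  obtain ⟨q, -, hqj, haq⟩ := exists_val_succ_notMem_of_mem_bdry π ha hao
  have hbj := (mem_evenOddPrefix_iff_of_odd π hbo).1 hb
  have : oddRank π q ≤ oddRank π b :=
    card_filter_lt_le_of_le (show π q ≤ π b by rw [Fin.le_def]; rw [Fin.lt_def] at hab; omega)
  omega

lemma card_filter_odd_bdry_le_one (j : ℕ) :
    #((bdry π (evenOddPrefix π j)).filter fun p : Fin k => Odd ((p : ℕ) + 1)) ≤ 1 := by
  refine card_le_one.2 fun a ha b hb => ?_
  rw [mem_filter] at ha hb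
  exact π.injective <| le_antisymm
    (val_le_of_mem_bdry_evenOddPrefix π hb.1 hb.2 (mem_filter.1 ha.1).1 ha.2)
    (val_le_of_mem_bdry_evenOddPrefix π ha.1 ha.2 (mem_filter.1 hb.1).1 hb.2)

theorem card_bdry_evenOddPrefix_le (j : ℕ) : #(bdry π (evenOddPrefix π j)) ≤ k / 2 + 1 := by
  rw [← card_filter_add_card_filter_not (fun p : Fin k => Odd ((p : ℕ) + 1))]
  have heven :
      #((bdry π (evenOddPrefix π j)).filter fun p : Fin k => ¬ Odd ((p : ℕ) + 1)) ≤ k / 2 :=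
    (card_le_card fun p hp => by simpa using (mem_filter.1 hp).2).trans
      (card_filter_even_succ_le k)
  have := card_filter_odd_bdry_le_one π j
  omega

end EvenOddOrder

theorem bdry_even_odd_order_general {k : ℕ} (π : Equiv.Perm (Fin k)) :
    (∀ P : Finset (Fin k), (∀ x : Fin k, Even ((x : ℕ) + 1) → x ∈ P) →
      ∀ p ∈ P, (∀ q : Fin k, nbr π p q → q ∈ P) → p ∉ bdry π P) ∧
    (∀ j : ℕ,
      ((bdry π (Finset.univ.filter (fun x : Fin k =>
          Even ((x : ℕ) + 1) ∨ (Odd ((x : ℕ) + 1) ∧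
            (Finset.univ.filter (fun y : Fin k =>
              Odd ((y : ℕ) + 1) ∧ π y < π x)).card < j)))).card : ℝ)
        ≤ (k : ℝ) / 2 + 1) := by
  refine ⟨fun P _ p _ => notMem_bdry_of_forall_nbr_mem π, fun j => ?_⟩
  change ((#(bdry π (evenOddPrefix π j)) : ℕ) : ℝ) ≤ _
  calc _ ≤ ((k / 2 + 1 : ℕ) : ℝ) := mod_cast card_bdry_evenOddPrefix_le π j
    _ ≤ (k : ℝ) / 2 + 1 := by
      push_cast
      gcongr
      exact Nat.cast_div_le

/-- let `k` be even, `Q^E` the even-index points, `Q^O` the odd-index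
points.  (1) For every set `P` containing `Q^E`, every point of `P` all of whose
existing neighbors lie in `P` is not on the boundary of `P`.  (2) For every `j`, the
prefix consisting of `Q^E` together with the `j` lowest-valued odd-index points has
boundary of size at most `k/2 + 1`. -/
theorem bdry_even_odd_order {k : ℕ} (hk : Even k) (π : Equiv.Perm (Fin k)) :
    (∀ P : Finset (Fin k), (∀ x : Fin k, Even ((x : ℕ) + 1) → x ∈ P) →
      ∀ p ∈ P, (∀ q : Fin k, nbr π p q → q ∈ P) → p ∉ bdry π P) ∧
    (∀ j : ℕ,
      ((bdry π (Finset.univ.filter (fun x : Fin k =>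
          Even ((x : ℕ) + 1) ∨ (Odd ((x : ℕ) + 1) ∧
            (Finset.univ.filter (fun y : Fin k =>
              Odd ((y : ℕ) + 1) ∧ π y < π x)).card < j)))).card : ℝ)
        ≤ (k : ℝ) / 2 + 1) :=
  bdry_even_odd_order_general π
end

section
/- Let a be an even positive integer and b a positive integer with ab = k, and let π(a,b) be the permutation of [k] defined as the unique permutation order-isomorphic to the concatenation T_1, …, T_b, where T_i interleaves L_i (the even integers in [1+(i-1)a, ia] in decreasing order) and R_i (the odd integers in [1+ia, (i+1)a] in increasing order). Then π(a,b) avoids the pattern (4,3,1,2). -/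
/-- The value at (0-based) position `p` of the sequence `T_1, …, T_b` (which is
order-isomorphic to the permutation `π(a,b)`): writing `p = i·a + q` with `q < a`,
an even offset `q` gives the element `(i+1)·a - q` of `L_{i+1}` (the even integers of
`[1+ia, (i+1)a]` in decreasing order) and an odd offset `q` gives the element
`(i+1)·a + q` of `R_{i+1}` (the odd integers of `[1+(i+1)a, (i+2)a]` in increasing
order), the two lists being interleaved. -/
def gridSeq (a p : ℕ) : ℕ :=
  if p % a % 2 = 0 then (p / a + 1) * a - p % a else (p / a + 1) * a + p % a

/-! An entry of `R_i` exceeds every earlier entry. An entry of `L_i` is smaller than every later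
entry outside `T_i`, and the later entries of `T_i` below it all lie in `L_i`, which decreases.
So the `2` of a `4312` can lie neither in some `R_i` (no `4` before it) nor in some `L_i`
(no `12` after it). -/

section

variable {a p p' p'' : ℕ}

lemma gridSeq_eq :
    gridSeq a p = if p % a % 2 = 0 then a * (p / a) + a - p % a else a * (p / a) + a + p % a := by
  simp only [gridSeq, add_mul, one_mul, mul_comm a]

lemma mul_div_eq_or_add_le_of_le (h : p ≤ p') :
    a * (p / a) = a * (p' / a) ∨ a * (p / a) + a ≤ a * (p' / a) := by
  rcases (Nat.div_le_div_right h : p / a ≤ p' / a).eq_or_lt with heq | hlt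
  · exact Or.inl (by rw [heq])
  · exact Or.inr (by simpa [Nat.mul_succ] using Nat.mul_le_mul_left a hlt)

lemma gridSeq_lt_of_lt_of_odd (ha : 0 < a) (hp : p % a % 2 = 1) (h : p' < p) :
    gridSeq a p' < gridSeq a p := by
  have hblock := mul_div_eq_or_add_le_of_le (a := a) h.le
  rw [gridSeq_eq, gridSeq_eq]
  have := Nat.div_add_mod p a
  have := Nat.div_add_mod p' a
  have := Nat.mod_lt p ha
  have := Nat.mod_lt p' ha
  split_ifs <;> omega

lemma gridSeq_lt_of_lt_of_even (ha : 0 < a) (hp : p % a % 2 = 0) (h' : p < p') (h'' : p' < p'')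
    (hv' : gridSeq a p' < gridSeq a p) (hv'' : gridSeq a p'' < gridSeq a p) :
    gridSeq a p'' < gridSeq a p' := by
  have hblock' := mul_div_eq_or_add_le_of_le (a := a) h'.le
  have hblock'' := mul_div_eq_or_add_le_of_le (a := a) h''.le
  rw [gridSeq_eq, gridSeq_eq] at *
  have := Nat.div_add_mod p a
  have := Nat.div_add_mod p' a
  have := Nat.div_add_mod p'' a
  have := Nat.mod_lt p ha
  have := Nat.mod_lt p' ha
  have := Nat.mod_lt p'' ha
  split_ifs at * <;> omega

end

theorem gridPerm_avoids_4312_general (a k : ℕ) (ha0 : 0 < a) :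
    ¬ ∃ p₁ p₂ p₃ p₄ : ℕ, p₁ < p₂ ∧ p₂ < p₃ ∧ p₃ < p₄ ∧ p₄ < k ∧
      gridSeq a p₃ < gridSeq a p₄ ∧ gridSeq a p₄ < gridSeq a p₂ ∧
      gridSeq a p₂ < gridSeq a p₁ := by
  rintro ⟨p₁, p₂, p₃, p₄, h₁₂, h₂₃, h₃₄, -, hv₃₄, hv₄₂, hv₂₁⟩
  rcases Nat.mod_two_eq_zero_or_one (p₂ % a) with hL | hR
  · exact lt_asymm hv₃₄ (gridSeq_lt_of_lt_of_even ha0 hL h₂₃ h₃₄ (hv₃₄.trans hv₄₂) hv₄₂)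
  · exact lt_asymm hv₂₁ (gridSeq_lt_of_lt_of_odd ha0 hR h₁₂)

/-- for `a` even positive and `b` positive with `ab = k`, the
permutation `π(a,b)` avoids the pattern `(4,3,1,2)`: there are no positions
`p₁ < p₂ < p₃ < p₄` whose values `v₁, v₂, v₃, v₄` satisfy `v₃ < v₄ < v₂ < v₁`. -/
theorem gridPerm_avoids_4312 (a b k : ℕ) (ha : Even a) (ha0 : 0 < a) (hb : 0 < b)
    (hk : k = a * b) :
    ¬ ∃ p₁ p₂ p₃ p₄ : ℕ, p₁ < p₂ ∧ p₂ < p₃ ∧ p₃ < p₄ ∧ p₄ < k ∧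
      gridSeq a p₃ < gridSeq a p₄ ∧ gridSeq a p₄ < gridSeq a p₂ ∧
      gridSeq a p₂ < gridSeq a p₁ :=
  gridPerm_avoids_4312_general a k ha0
end
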